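/- arXiv:2412.07118 — 2 statements merged into one kernel-verified Lean document; each statement's English description precedes it below -/
import Mathlib

section
/- The lowest-degree tensor product space of differential k-forms satisfies Q_1^-Λ^k = span{ x_τ dx^σ : σ a strictly increasing k-index in {1,...,n}, τ a strictly increasing index set with 0 ≤ |τ| ≤ n−k, and τ ⊆ σ^c }, where σ^c is the complement of σ in {1,...,n}. -/
open MvPolynomial Finset MeasureTheory

/-- Strictly increasing `k`-indices in `{1,…,n}`, modelled as `k`-element subsets of `Fin n`. -/
abbrev Idx (n k : ℕ) := {s : Finset (Fin n) // s.card = k}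

/-- A differential `k`-form with polynomial coefficients on `ℝⁿ`:
one polynomial coefficient for each increasing `k`-index. -/
abbrev Form (n k : ℕ) := Idx n k → MvPolynomial (Fin n) ℝ

/-- The sign `(-1)^{#\{j ∈ s : j < i\}}`. -/
noncomputable def sgn {n : ℕ} (s : Finset (Fin n)) (i : Fin n) : ℝ :=
  (-1) ^ (s.filter (· < i)).card

def eraseIdx {n k : ℕ} (s : Idx n (k+1)) {i : Fin n} (hi : i ∈ s.1) : Idx n k :=
  ⟨s.1.erase i, by simp [Finset.card_erase_of_mem hi, s.2]⟩

def insertIdx {n k : ℕ} (s : Idx n k) {i : Fin n} (hi : i ∉ s.1) : Idx n (k+1) :=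
  ⟨insert i s.1, by simp [Finset.card_insert_of_notMem hi, s.2]⟩

/-- The exterior derivative `d^k`. -/
noncomputable def extd (n k : ℕ) : Form n k →ₗ[ℝ] Form n (k+1) where
  toFun ω := fun s => ∑ i ∈ s.1.attach, sgn s.1 i.1 • pderiv i.1 (ω (eraseIdx s i.2))
  map_add' ω η := by
    funext s
    simp [Finset.sum_add_distrib, smul_add]
  map_smul' c ω := by
    funext s
    simp only [Pi.smul_apply, RingHom.id_apply]
    rw [Finset.smul_sum]
    exact Finset.sum_congr rfl (fun i _ => by rw [(pderiv i.1).map_smul, smul_comm])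

/-- The Koszul operator `κ` (contraction with the position vector field). -/
noncomputable def koszul (n k : ℕ) : Form n (k+1) →ₗ[ℝ] Form n k where
  toFun ω := fun s =>
    ∑ i ∈ (s.1ᶜ).attach, sgn s.1 i.1 • (X i.1 * ω (insertIdx s (Finset.mem_compl.mp i.2)))
  map_add' ω η := by
    funext s
    simp [Finset.sum_add_distrib, mul_add, smul_add]
  map_smul' c ω := by
    funext s
    simp only [Pi.smul_apply, RingHom.id_apply, mul_smul_comm]
    rw [Finset.smul_sum]
    exact Finset.sum_congr rfl (fun i _ => (smul_comm _ _ _))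

/-- The codifferential `δ_{k+1}` (the formal adjoint of `d^k` on Euclidean `ℝⁿ`,
which coincides with `(-1)^{(k+1)n} ⋆ d^{n-k-1} ⋆`). -/
noncomputable def codiff (n k : ℕ) : Form n (k+1) →ₗ[ℝ] Form n k where
  toFun ω := fun s =>
    -∑ i ∈ (s.1ᶜ).attach, sgn s.1 i.1 • pderiv i.1 (ω (insertIdx s (Finset.mem_compl.mp i.2)))
  map_add' ω η := by
    funext s
    simp [Finset.sum_add_distrib, smul_add]
    ring
  map_smul' c ω := by
    funext s
    simp only [Pi.smul_apply, RingHom.id_apply, smul_neg, neg_inj]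
    rw [Finset.smul_sum]
    exact Finset.sum_congr rfl (fun i _ => by rw [(pderiv i.1).map_smul, smul_comm])

/-- The operator `κ^δ = ⋆ ∘ κ ∘ ⋆` (exterior multiplication by `Σ xᵢ dxⁱ`, up to sign). -/
noncomputable def kappaDelta (n k : ℕ) : Form n k →ₗ[ℝ] Form n (k+1) where
  toFun ω := fun s => ∑ i ∈ s.1.attach, sgn s.1 i.1 • (X i.1 * ω (eraseIdx s i.2))
  map_add' ω η := by
    funext s
    simp [Finset.sum_add_distrib, mul_add, smul_add]
  map_smul' c ω := by
    funext s
    simp only [Pi.smul_apply, RingHom.id_apply, mul_smul_comm]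
    rw [Finset.smul_sum]
    exact Finset.sum_congr rfl (fun i _ => (smul_comm _ _ _))

/-- Sign of the permutation `(t, tᶜ) ↦ (1,…,n)`, i.e. `⋆ dx^t = starSign t · dx^{tᶜ}`. -/
noncomputable def starSign {n : ℕ} (t : Finset (Fin n)) : ℝ :=
  (-1) ^ (∑ i ∈ t, ((tᶜ).filter (· < i)).card)

/-- The Hodge star operator on `k`-forms on `ℝⁿ`, `k + l = n`. -/
noncomputable def hodge (n k l : ℕ) (h : k + l = n) : Form n k →ₗ[ℝ] Form n l where
  toFun ω := fun s => starSign (s.1ᶜ) •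
    ω ⟨s.1ᶜ, by rw [Finset.card_compl, s.2, Fintype.card_fin]; omega⟩
  map_add' ω η := by funext s; simp [smul_add]
  map_smul' c ω := by funext s; simp only [Pi.smul_apply, RingHom.id_apply]; rw [smul_comm]

/-- The monomial form `x_τ dx^σ`. -/
noncomputable def monForm (n k : ℕ) (τ : Finset (Fin n)) (σ : Idx n k) : Form n k :=
  fun s => if s = σ then ∏ i ∈ τ, X i else 0

/-- `Q_1^-Λ^k = span{ x_τ dx^σ : |σ| = k, 0 ≤ |τ| ≤ n-k, τ ⊆ σᶜ }`. -/
noncomputable def Qm (n k : ℕ) : Submodule ℝ (Form n k) :=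
  Submodule.span ℝ
    {ω | ∃ (τ : Finset (Fin n)) (σ : Idx n k), τ.card ≤ n - k ∧ τ ⊆ (σ.1)ᶜ ∧ ω = monForm n k τ σ}

/-- `Q_1^{*,-}Λ^k = span{ x_τ' dx^σ' : |σ'| = k, 0 ≤ |τ'| ≤ k, τ' ⊆ σ' }`. -/
noncomputable def Qs (n k : ℕ) : Submodule ℝ (Form n k) :=
  Submodule.span ℝ
    {ω | ∃ (τ : Finset (Fin n)) (σ : Idx n k), τ.card ≤ k ∧ τ ⊆ σ.1 ∧ ω = monForm n k τ σ}

/-- `P_0Λ^k`: forms with constant coefficients. -/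
noncomputable def P0 (n k : ℕ) : Submodule ℝ (Form n k) :=
  Submodule.span ℝ {ω | ∃ σ : Idx n k, ω = monForm n k ∅ σ}

/-- The Whitney space `P_1^-Λ^k = P_0Λ^k + κ(P_0Λ^{k+1})`. -/
noncomputable def Pm (n k : ℕ) : Submodule ℝ (Form n k) :=
  P0 n k ⊔ Submodule.map (koszul n k) (P0 n (k+1))

/-- The star Whitney space `P_1^{*,-}Λ^{k+1} = P_0Λ^{k+1} + κ^δ(P_0Λ^k)`. -/
noncomputable def PsS (n k : ℕ) : Submodule ℝ (Form n (k+1)) :=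
  P0 n (k+1) ⊔ Submodule.map (kappaDelta n k) (P0 n k)

/-- `L²` inner product of `k`-forms on the centered box `[-r, r]`. -/
noncomputable def binner (n k : ℕ) (r : Fin n → ℝ) (ω η : Form n k) : ℝ :=
  ∑ s : Idx n k, ∫ x in Set.Icc (fun i => -(r i)) r, eval x (ω s * η s)

/-- `L²` inner product of `k`-forms on the reference cube `T = [-1,1]ⁿ`. -/
noncomputable def finner (n k : ℕ) (ω η : Form n k) : ℝ :=
  binner n k (fun _ => (1 : ℝ)) ω η

/-- The lowest-degree tensor product space
`Q_1^-Λ^k = ⊕_{α ∈ IX_{k,n}} [⊗_{i=1}^n P_{1-δ_{i,α}}([-1,1])] dx^α`: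
the coefficient of `dx^σ` has degree at most `1 - δ_{i,σ}` in each variable `x_i`. -/
noncomputable def Qtensor (n k : ℕ) : Submodule ℝ (Form n k) where
  carrier := {ω | ∀ σ : Idx n k, ∀ m ∈ (ω σ).support, ∀ i : Fin n,
    m i ≤ if i ∈ σ.1 then 0 else 1}
  add_mem' := by
    intro a b ha hb σ m hm i
    rcases Finset.mem_union.mp (MvPolynomial.support_add hm) with h | h
    · exact ha σ m h i
    · exact hb σ m h i
  zero_mem' := by intro σ m hm i; simp at hm
  smul_mem' := by
    intro c a ha σ m hm i
    exact ha σ m (MvPolynomial.support_smul hm) i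


/-! The degree bounds `1 - δ_{i,σ}` say exactly that every monomial of the `dx^σ` coefficient is
squarefree and avoids the variables of `σ`, i.e. is `x_τ` with `τ = supp m ⊆ σᶜ`; the bound
`|τ| ≤ n - k` then holds automatically. -/

namespace MvPolynomial

variable {σ R : Type*} [CommSemiring R]

lemma prod_X_eq_monomial (τ : Finset σ) :
    (∏ i ∈ τ, X i : MvPolynomial σ R) = monomial (∑ i ∈ τ, Finsupp.single i 1) 1 := by
  simp_rw [monomial_sum_one, X]

lemma monomial_eq_smul_prod_X {m : σ →₀ ℕ} (hm : ∀ i ∈ m.support, m i = 1) (c : R) :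
    monomial m c = c • ∏ i ∈ m.support, (X i : MvPolynomial σ R) := by
  rw [monomial_eq, smul_eq_C_mul, Finsupp.prod]
  exact congrArg _ (Finset.prod_congr rfl fun i hi => by rw [hm i hi, pow_one])

end MvPolynomial

section TensorProductSpace

variable {n k : ℕ}

lemma monForm_eq_piSingle (τ : Finset (Fin n)) (σ : Idx n k) :
    monForm n k τ σ = Pi.single σ (∏ i ∈ τ, X i) := by
  funext s
  simp [monForm, Pi.single_apply]

lemma monForm_mem_Qtensor {τ : Finset (Fin n)} {σ : Idx n k} (hτ : τ ⊆ σ.1ᶜ) :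
    monForm n k τ σ ∈ Qtensor n k := by
  intro s m hm i
  rw [monForm_eq_piSingle] at hm
  obtain rfl : s = σ := by
    by_contra hs
    simp [Pi.single_eq_of_ne hs] at hm
  rw [Pi.single_eq_same, prod_X_eq_monomial, support_monomial, if_neg one_ne_zero,
    Finset.mem_singleton] at hm
  subst hm
  have hτi : (∑ j ∈ τ, Finsupp.single j 1) i = if i ∈ τ then 1 else 0 := by
    simp [Finset.sum_apply', Finsupp.single_apply]
  rw [hτi]
  split_ifs with hi hiσ <;> first | omega | exact absurd hiσ (Finset.mem_compl.mp (hτ hi))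

lemma Qm_le_Qtensor : Qm n k ≤ Qtensor n k := by
  rw [Qm, Submodule.span_le]
  rintro _ ⟨τ, σ, -, hτ, rfl⟩
  exact monForm_mem_Qtensor hτ

variable {ω : Form n k} {σ : Idx n k} {m : Fin n →₀ ℕ}

lemma support_subset_compl_of_mem_Qtensor (hω : ω ∈ Qtensor n k) (hm : m ∈ (ω σ).support) :
    m.support ⊆ σ.1ᶜ := fun i hi =>
  Finset.mem_compl.mpr fun hiσ =>
    Finsupp.mem_support_iff.mp hi (Nat.le_zero.mp (by simpa [hiσ] using hω σ m hm i))

lemma eq_one_of_mem_Qtensor (hω : ω ∈ Qtensor n k) (hm : m ∈ (ω σ).support) :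
    ∀ i ∈ m.support, m i = 1 := fun i hi => by
  have := hω σ m hm i
  have := Finsupp.mem_support_iff.mp hi
  split_ifs at * <;> omega

lemma single_monomial_mem_Qm (hm : ∀ i ∈ m.support, m i = 1) (hmσ : m.support ⊆ σ.1ᶜ)
    (c : ℝ) : Pi.single σ (monomial m c) ∈ Qm n k := by
  have hcard : m.support.card ≤ n - k := by
    simpa [Finset.card_compl, σ.2] using Finset.card_le_card hmσ
  rw [monomial_eq_smul_prod_X hm, Pi.single_smul', ← monForm_eq_piSingle]
  exact Submodule.smul_mem _ c (Submodule.subset_span ⟨m.support, σ, hcard, hmσ, rfl⟩)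

lemma Qtensor_le_Qm : Qtensor n k ≤ Qm n k := by
  intro ω hω
  rw [← Finset.univ_sum_single ω]
  refine Submodule.sum_mem _ fun σ _ => ?_
  rw [(ω σ).as_sum, ← LinearMap.single_apply ℝ, map_sum]
  exact Submodule.sum_mem _ fun m hm => single_monomial_mem_Qm
    (eq_one_of_mem_Qtensor hω hm) (support_subset_compl_of_mem_Qtensor hω hm) _

end TensorProductSpace

theorem stmt0_general (n k : ℕ) : Qtensor n k = Qm n k :=
  le_antisymm Qtensor_le_Qm Qm_le_Qtensor

/-- Lemma 3.1. `Q_1^-Λ^k` (tensor product definition) equals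
`span{ x_τ dx^σ : σ ∈ IX_{k,n}, 0 ≤ |τ| ≤ n-k, τ ⊆ σᶜ }`. -/
theorem stmt0 (n k : ℕ) (hk : k ≤ n) : Qtensor n k = Qm n k :=
  stmt0_general n k
end

section
/- If ω is a polynomial k-form with homogeneous coefficients of degree j lying in Q_1^-Λ^k and d^k ω = 0, then the Koszul image κω lies in Q_1^-Λ^{k-1} and d^{k-1}(κω) = (k+j)·ω; in particular ω lies in the range of d^{k-1} on Q_1^-Λ^{k-1}. -/
open MvPolynomial Finset MeasureTheory

/-!
Cartan's formula `dκ + κd = (k + 1) + Σᵢ xᵢ ∂ᵢ` on `(k+1)`-forms is checked coefficientwise: in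
`(dκω)_s` the terms with `i = m` give `(k+1) ω_s + Σ_{i ∈ s} xᵢ ∂ᵢ ω_s`, in `(κdω)_s` they give
`Σ_{m ∉ s} x_m ∂_m ω_s`, and all other terms cancel in pairs. For homogeneous coefficients of degree
`j`, Euler's identity turns this into `(k + 1 + j) ω`, so a closed `ω` equals `d(κω / (k + 1 + j))`.
Finally `κ(x_τ dx^σ)` is a signed sum of the forms `x_{τ ∪ {i}} dx^{σ \ {i}}`, `i ∈ σ`, so `κ`
maps `Q_1^-Λ^{k+1}` into `Q_1^-Λ^k`.
-/

section Coefficients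

variable {n k : ℕ}

noncomputable def formCoeff (ω : Form n k) (t : Finset (Fin n)) : MvPolynomial (Fin n) ℝ :=
  if h : t.card = k then ω ⟨t, h⟩ else 0

lemma formCoeff_val (ω : Form n k) (s : Idx n k) : formCoeff ω s.1 = ω s :=
  dif_pos s.2

lemma monForm_apply (τ : Finset (Fin n)) (σ s : Idx n k) :
    monForm n k τ σ s = if s.1 = σ.1 then ∏ i ∈ τ, X i else 0 := by
  simp only [monForm, Subtype.ext_iff]

lemma extd_apply_eq_sum (ω : Form n k) (s : Idx n (k+1)) :
    extd n k ω s = ∑ i ∈ s.1, sgn s.1 i • pderiv i (formCoeff ω (s.1.erase i)) := by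
  rw [← Finset.sum_attach]
  refine Finset.sum_congr rfl fun i _ => ?_
  rw [formCoeff, dif_pos (by rw [Finset.card_erase_of_mem i.2, s.2]; rfl)]
  rfl

lemma koszul_apply_eq_sum (ω : Form n (k+1)) (s : Idx n k) :
    koszul n k ω s = ∑ i ∈ s.1ᶜ, sgn s.1 i • (X i * formCoeff ω (insert i s.1)) := by
  rw [← Finset.sum_attach]
  refine Finset.sum_congr rfl fun i _ => ?_
  rw [formCoeff, dif_pos (by rw [Finset.card_insert_of_notMem (Finset.mem_compl.mp i.2), s.2])]
  rfl

end Coefficients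

section Sign

variable {n : ℕ}

lemma sgn_mul_self (s : Finset (Fin n)) (i : Fin n) : sgn s i * sgn s i = 1 := by
  rw [sgn, ← pow_add]
  exact Even.neg_one_pow ⟨_, rfl⟩

lemma sgn_erase_self (s : Finset (Fin n)) (i : Fin n) : sgn (s.erase i) i = sgn s i := by
  rw [sgn, sgn, Finset.filter_erase, Finset.erase_eq_of_notMem (by simp)]

lemma sgn_insert_self (s : Finset (Fin n)) (m : Fin n) : sgn (insert m s) m = sgn s m := by
  rw [sgn, sgn, Finset.filter_insert, if_neg (lt_irrefl m)]

lemma sgn_insert {s : Finset (Fin n)} {m : Fin n} (hm : m ∉ s) (i : Fin n) :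
    sgn (insert m s) i = if m < i then -sgn s i else sgn s i := by
  rw [sgn, sgn, Finset.filter_insert]
  split
  · rw [Finset.card_insert_of_notMem fun h => hm (Finset.mem_filter.mp h).1, pow_succ, mul_neg_one]
  · rfl

lemma sgn_erase {s : Finset (Fin n)} {i : Fin n} (hi : i ∈ s) (m : Fin n) :
    sgn (s.erase i) m = if i < m then -sgn s m else sgn s m := by
  have h := sgn_insert (Finset.notMem_erase i s) m
  rw [Finset.insert_erase hi] at h
  rw [h]
  split <;> ring

lemma sgn_mul_sgn_erase {s : Finset (Fin n)} {i m : Fin n} (hi : i ∈ s) (hm : m ∉ s) :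
    sgn s i * sgn (s.erase i) m = -(sgn s m * sgn (insert m s) i) := by
  rw [sgn_erase hi, sgn_insert hm]
  rcases lt_or_gt_of_ne (ne_of_mem_of_not_mem hi hm) with h | h
  · rw [if_pos h, if_neg (asymm h)]; ring
  · rw [if_neg (asymm h), if_pos h]; ring

end Sign

section Cartan

variable {n k : ℕ}

lemma extd_koszul_apply (ω : Form n (k+1)) (s : Idx n (k+1)) :
    extd n k (koszul n k ω) s = ∑ i ∈ s.1, (ω s + X i * pderiv i (ω s)) +
      ∑ i ∈ s.1, ∑ m ∈ s.1ᶜ, (sgn s.1 i * sgn (s.1.erase i) m) •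
        (X m * pderiv i (formCoeff ω (insert m (s.1.erase i)))) := by
  rw [extd_apply_eq_sum, ← Finset.sum_add_distrib]
  refine Finset.sum_congr rfl fun i hi => ?_
  rw [formCoeff, dif_pos (by rw [Finset.card_erase_of_mem hi, s.2]; rfl), koszul_apply_eq_sum,
    Finset.compl_erase, Finset.sum_insert (by simp [hi]), map_add, smul_add, map_sum,
    Finset.smul_sum]
  congr 1
  · rw [Derivation.map_smul, smul_smul, sgn_erase_self, sgn_mul_self, one_smul,
      Finset.insert_erase hi, formCoeff_val, pderiv_mul, pderiv_X_self, one_mul]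
  · refine Finset.sum_congr rfl fun m hm => ?_
    rw [Derivation.map_smul, smul_smul, pderiv_mul,
      pderiv_X_of_ne (ne_of_mem_of_not_mem hi (Finset.mem_compl.mp hm)).symm, zero_mul, zero_add]

lemma koszul_extd_apply (ω : Form n (k+1)) (s : Idx n (k+1)) :
    koszul n (k+1) (extd n (k+1) ω) s = ∑ m ∈ s.1ᶜ, X m * pderiv m (ω s) -
      ∑ i ∈ s.1, ∑ m ∈ s.1ᶜ, (sgn s.1 i * sgn (s.1.erase i) m) •
        (X m * pderiv i (formCoeff ω (insert m (s.1.erase i)))) := by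
  rw [koszul_apply_eq_sum, Finset.sum_comm, sub_eq_add_neg, ← Finset.sum_neg_distrib,
    ← Finset.sum_add_distrib]
  refine Finset.sum_congr rfl fun m hm => ?_
  have hm' : m ∉ s.1 := Finset.mem_compl.mp hm
  rw [formCoeff, dif_pos (by rw [Finset.card_insert_of_notMem hm', s.2]), extd_apply_eq_sum,
    Finset.sum_insert hm', mul_add, smul_add, Finset.mul_sum, Finset.smul_sum,
    ← Finset.sum_neg_distrib]
  congr 1
  · rw [mul_smul_comm, smul_smul, sgn_insert_self, sgn_mul_self, one_smul,
      Finset.erase_insert hm', formCoeff_val]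
  · refine Finset.sum_congr rfl fun i hi => ?_
    rw [mul_smul_comm, smul_smul, sgn_mul_sgn_erase hi hm', neg_smul, neg_neg,
      Finset.erase_insert_of_ne (ne_of_mem_of_not_mem hi hm').symm]

theorem extd_koszul_add_koszul_extd_apply (ω : Form n (k+1)) (s : Idx n (k+1)) :
    extd n k (koszul n k ω) s + koszul n (k+1) (extd n (k+1) ω) s
      = (k + 1) • ω s + ∑ i, X i * pderiv i (ω s) := by
  rw [extd_koszul_apply, koszul_extd_apply, Finset.sum_add_distrib, Finset.sum_const, s.2,
    ← Finset.sum_add_sum_compl s.1]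
  abel

theorem extd_koszul_add_koszul_extd_of_isHomogeneous {j : ℕ} (ω : Form n (k+1))
    (hω : ∀ s, (ω s).IsHomogeneous j) :
    extd n k (koszul n k ω) + koszul n (k+1) (extd n (k+1) ω)
      = ((k + 1 + j : ℕ) : ℝ) • ω := by
  funext s
  rw [Pi.add_apply, extd_koszul_add_koszul_extd_apply, (hω s).sum_X_mul_pderiv, ← add_smul,
    Pi.smul_apply, Nat.cast_smul_eq_nsmul]

end Cartan

section KoszulQm

variable {n k : ℕ}

lemma koszul_monForm (τ : Finset (Fin n)) (σ : Idx n (k+1)) (hτ : τ ⊆ σ.1ᶜ) :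
    koszul n k (monForm n (k+1) τ σ)
      = ∑ i ∈ σ.1.attach,
          sgn (σ.1.erase i) i • monForm n k (insert i.1 τ) (eraseIdx σ i.2) := by
  funext s
  have hsets :
      s.1ᶜ.filter (fun m => insert m s.1 = σ.1) = σ.1.filter (fun m => s.1 = σ.1.erase m) := by
    ext m
    simp only [Finset.mem_filter, Finset.mem_compl]
    constructor
    · rintro ⟨hm, h⟩
      exact ⟨h ▸ Finset.mem_insert_self m s.1, by rw [← h, Finset.erase_insert hm]⟩
    · rintro ⟨hm, h⟩
      exact ⟨h ▸ Finset.notMem_erase m σ.1, by rw [h, Finset.insert_erase hm]⟩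
  have hκ : koszul n k (monForm n (k+1) τ σ) s
      = ∑ m ∈ s.1ᶜ.filter (fun m => insert m s.1 = σ.1),
          sgn s.1 m • (X m * ∏ x ∈ τ, X x) := by
    rw [koszul_apply_eq_sum, Finset.sum_filter]
    refine Finset.sum_congr rfl fun m hm => ?_
    rw [formCoeff, dif_pos (by rw [Finset.card_insert_of_notMem (Finset.mem_compl.mp hm), s.2]),
      monForm_apply]
    split_ifs <;> simp
  rw [hκ, hsets, Finset.sum_apply, Finset.sum_filter, ← Finset.sum_attach]
  refine Finset.sum_congr rfl fun i _ => ?_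
  rw [Pi.smul_apply, monForm_apply]
  show _ = sgn (σ.1.erase i) i • if s.1 = σ.1.erase i then _ else _
  split_ifs with h
  · rw [h, Finset.prod_insert fun hi => Finset.mem_compl.mp (hτ hi) i.2]
  · rw [smul_zero]

lemma koszul_mem_Qm {ω : Form n (k+1)} (hω : ω ∈ Qm n (k+1)) : koszul n k ω ∈ Qm n k := by
  suffices Qm n (k+1) ≤ (Qm n k).comap (koszul n k) from this hω
  refine Submodule.span_le.mpr ?_
  rintro _ ⟨τ, σ, -, hτ, rfl⟩
  rw [SetLike.mem_coe, Submodule.mem_comap, koszul_monForm τ σ hτ]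
  refine Submodule.sum_mem _ fun i _ => Submodule.smul_mem _ _ (Submodule.subset_span ?_)
  have hiτ : i.1 ∉ τ := fun h => Finset.mem_compl.mp (hτ h) i.2
  have hσ : k + 1 ≤ n := σ.2 ▸ (Finset.card_le_univ σ.1).trans_eq (Fintype.card_fin n)
  refine ⟨insert i.1 τ, eraseIdx σ i.2, ?_, ?_, rfl⟩
  · have := Finset.card_le_card hτ
    rw [Finset.card_compl, σ.2, Fintype.card_fin] at this
    rw [Finset.card_insert_of_notMem hiτ]
    omega
  · show insert i.1 τ ⊆ (σ.1.erase i)ᶜ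
    rw [Finset.compl_erase]
    exact Finset.insert_subset_insert _ hτ

end KoszulQm

/-- If `ω` is a `(k+1)`-form in `Q_1^-Λ^{k+1}` with homogeneous coefficients of
degree `j` and `dω = 0`, then `κω ∈ Q_1^-Λ^k`, `d(κω) = ((k+1)+j)·ω`, and in particular
`ω ∈ R(d^k, Q_1^-Λ^k)`. -/
theorem stmt3 (n k j : ℕ) (ω : Form n (k+1)) (hω : ω ∈ Qm n (k+1))
    (hhom : ∀ s : Idx n (k+1), (ω s).IsHomogeneous j)
    (hd : extd n (k+1) ω = 0) :
    koszul n k ω ∈ Qm n k ∧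
      extd n k (koszul n k ω) = (((k + 1 + j : ℕ) : ℝ)) • ω ∧
      ω ∈ Submodule.map (extd n k) (Qm n k) := by
  have hκ : koszul n k ω ∈ Qm n k := koszul_mem_Qm hω
  have hdκ : extd n k (koszul n k ω) = ((k + 1 + j : ℕ) : ℝ) • ω := by
    simpa [hd] using extd_koszul_add_koszul_extd_of_isHomogeneous ω hhom
  have hc : ((k + 1 + j : ℕ) : ℝ) ≠ 0 := Nat.cast_ne_zero.mpr (by omega)
  refine ⟨hκ, hdκ, (((k + 1 + j : ℕ) : ℝ))⁻¹ • koszul n k ω, Submodule.smul_mem _ _ hκ, ?_⟩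
  rw [LinearMap.map_smul, hdκ, smul_smul, inv_mul_cancel₀ hc, one_smul]
end
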